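/- If the left integral does not vanish at the identity, then left and right integrals coincide and the modular element is trivial: if φ(1) = 1 then (φ ⊗ id)(Δ(a)) = φ(a)·1 for all a ∈ A (so φ is also a right integral) and φ(S(a)) = φ(a) for all a ∈ A. -/

import Mathlib

/-! The antipode is an anti-coalgebra map, `Δ ∘ S = (S ⊗ S) ∘ τ ∘ Δ`: in the convolution algebra
`Hom(A, A ⊗ A)` the right side factors as `(1 ⊗ S ·) * (S · ⊗ 1)` and `Δ` as `(· ⊗ 1) * (1 ⊗ ·)`,
so both sides are convolution inverses of `Δ`. Hence, for injective `S`, `ψ = φ ∘ S` is a right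
integral whenever `φ` is a left integral. Evaluating `(ψ ⊗ φ)(Δ a)` with either integral property
gives `φ(a) ψ(1) = ψ(a) φ(1)`, and `φ(1) = ψ(1) = 1` turns this into `ψ = φ`. -/

open TensorProduct HopfAlgebra WithConv

section
variable {R A B C : Type*} [CommSemiring R] [Semiring A] [Algebra R A] [Semiring B] [Algebra R B]
  [AddCommMonoid C] [Module R C] [Coalgebra R C]

noncomputable def AlgHom.convCompLeft (h : A →ₐ[R] B) :
    WithConv (C →ₗ[R] A) →* WithConv (C →ₗ[R] B) where
  toFun f := toConv (h.toLinearMap ∘ₗ f.ofConv)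
  map_one' := by ext; simp
  map_mul' f g := WithConv.ext (LinearMap.algHom_comp_convMul_distrib h f g)

end

section
open Algebra.TensorProduct
variable {R A B : Type*} [CommSemiring R] [Semiring A] [Algebra R A] [Semiring B] [Algebra R B]

lemma mul'_comp_map_includeLeft_includeRight :
    LinearMap.mul' R (A ⊗[R] B) ∘ₗ map (includeLeft (S := R)).toLinearMap includeRight.toLinearMap =
      .id :=
  ext' fun x y => by simp

lemma mul'_comp_map_includeRight_includeLeft :
    LinearMap.mul' R (A ⊗[R] B) ∘ₗ map includeRight.toLinearMap (includeLeft (S := R)).toLinearMap =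
      (TensorProduct.comm R B A).toLinearMap :=
  ext' fun x y => by simp

end

namespace HopfAlgebra

open Algebra.TensorProduct Coalgebra

variable {R A : Type*} [CommSemiring R] [Semiring A] [HopfAlgebra R A]

lemma toConv_comul_eq_includeLeft_mul_includeRight :
    toConv (comul : A →ₗ[R] A ⊗[R] A) =
      includeLeft.convCompLeft (toConv .id) * includeRight.convCompLeft (toConv .id) := by
  ext1
  simp only [AlgHom.convCompLeft, MonoidHom.coe_mk, OneHom.coe_mk, LinearMap.convMul_def,
    LinearMap.comp_id, ← LinearMap.comp_assoc, mul'_comp_map_includeLeft_includeRight,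
    LinearMap.id_comp]

lemma toConv_map_antipode_comm_comul_eq_includeRight_mul_includeLeft :
    toConv (map (antipode R) (antipode R) ∘ₗ (TensorProduct.comm R A A).toLinearMap ∘ₗ comul) =
      includeRight.convCompLeft (toConv (antipode R (A := A))) *
        includeLeft.convCompLeft (toConv (antipode R (A := A))) := by
  ext1
  simp only [AlgHom.convCompLeft, MonoidHom.coe_mk, OneHom.coe_mk, LinearMap.convMul_def,
    TensorProduct.map_comp, ← LinearMap.comp_assoc, mul'_comp_map_includeRight_includeLeft,
    map_comp_comm_eq]

lemma toConv_map_antipode_comm_comul_mul_comul :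
    toConv (map (antipode R) (antipode R) ∘ₗ (TensorProduct.comm R A A).toLinearMap ∘ₗ comul) *
      toConv (comul : A →ₗ[R] A ⊗[R] A) = 1 := by
  calc _ = includeRight.convCompLeft (toConv (antipode R)) *
          includeLeft.convCompLeft (toConv (antipode R) * toConv .id) *
          includeRight.convCompLeft (toConv .id) := by
        rw [toConv_map_antipode_comm_comul_eq_includeRight_mul_includeLeft,
          toConv_comul_eq_includeLeft_mul_includeRight, map_mul]
        simp only [mul_assoc]
    _ = includeRight.convCompLeft (toConv (antipode R) * toConv .id) := by
        rw [map_mul includeRight.convCompLeft, LinearMap.antipode_mul_id, map_one, mul_one]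
    _ = 1 := by rw [LinearMap.antipode_mul_id, map_one]

theorem comul_comp_antipode :
    comul ∘ₗ antipode R (A := A) =
      map (antipode R) (antipode R) ∘ₗ (TensorProduct.comm R A A).toLinearMap ∘ₗ comul :=
  congr_arg ofConv (left_inv_eq_right_inv toConv_map_antipode_comm_comul_mul_comul
    LinearMap.comul_right_inv).symm

end HopfAlgebra

section Integrals

open Coalgebra

variable {R A : Type*} [CommSemiring R] [Semiring A]

def IsLeftIntegral [Bialgebra R A] (φ : A →ₗ[R] R) : Prop :=
  ∀ a : A, TensorProduct.rid R A (φ.lTensor A (comul a)) = φ a • (1 : A)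

def IsRightIntegral [Bialgebra R A] (φ : A →ₗ[R] R) : Prop :=
  ∀ a : A, TensorProduct.lid R A (φ.rTensor A (comul a)) = φ a • (1 : A)

theorem IsLeftIntegral.apply_mul_apply_one [Bialgebra R A] {φ ψ : A →ₗ[R] R}
    (hφ : IsLeftIntegral φ) (hψ : IsRightIntegral ψ) (a : A) : φ a * ψ 1 = ψ a * φ 1 := by
  -- both sides are `(ψ ⊗ φ) (Δ a)`
  have pairing : ∀ t : A ⊗[R] A,
      φ (TensorProduct.lid R A (ψ.rTensor A t)) = ψ (TensorProduct.rid R A (φ.lTensor A t)) := by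
    intro t
    induction t using TensorProduct.induction_on with
    | zero => simp
    | tmul x y => simp [mul_comm]
    | add t₁ t₂ h₁ h₂ => simp only [map_add, h₁, h₂]
  simpa [hφ a, hψ a, mul_comm] using (pairing (comul a)).symm

variable [HopfAlgebra R A]

lemma antipode_lid_rTensor_comp_antipode (φ : A →ₗ[R] R) (a : A) :
    antipode R (TensorProduct.lid R A ((φ ∘ₗ antipode R).rTensor A (comul a))) =
      TensorProduct.rid R A (φ.lTensor A (comul (antipode R a))) := by
  rw [← LinearMap.comp_apply comul, HopfAlgebra.comul_comp_antipode]
  simp only [LinearMap.comp_apply, LinearEquiv.coe_coe]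
  induction comul (R := R) a using TensorProduct.induction_on with
  | zero => simp
  | tmul x y => simp
  | add t₁ t₂ h₁ h₂ => simp_all

theorem IsLeftIntegral.isRightIntegral_comp_antipode {φ : A →ₗ[R] R} (hφ : IsLeftIntegral φ)
    (hS : Function.Injective (antipode R (A := A))) : IsRightIntegral (φ ∘ₗ antipode R) := by
  intro a
  apply hS
  rw [antipode_lid_rTensor_comp_antipode, hφ, map_smul, antipode_one, LinearMap.comp_apply]

theorem IsLeftIntegral.comp_antipode_eq_self {φ : A →ₗ[R] R} (hφ : IsLeftIntegral φ)
    (hS : Function.Injective (antipode R (A := A))) (hφ1 : φ 1 = 1) : φ ∘ₗ antipode R = φ := by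
  ext a
  simpa [hφ1] using (hφ.apply_mul_apply_one (hφ.isRightIntegral_comp_antipode hS) a).symm

end Integrals

theorem left_integral_unital_is_right_integral_general
    {A : Type*} [Ring A] [HopfAlgebra ℂ A]
    (hS : Function.Bijective (antipode (R := ℂ) (A := A)))
    (φ : A →ₗ[ℂ] ℂ)
    (hφL : ∀ a : A,
      (TensorProduct.rid ℂ A) (LinearMap.lTensor A φ (Coalgebra.comul a)) = φ a • (1 : A))
    (hφ1 : φ 1 = 1) :
    (∀ a : A,
        (TensorProduct.lid ℂ A) (LinearMap.rTensor A φ (Coalgebra.comul a)) = φ a • (1 : A)) ∧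
      ∀ a : A, φ (antipode (R := ℂ) a) = φ a := by
  have hφ : IsLeftIntegral φ := hφL
  have hSφ := hφ.comp_antipode_eq_self hS.injective hφ1
  have hRight : IsRightIntegral φ := hSφ ▸ hφ.isRightIntegral_comp_antipode hS.injective
  exact ⟨hRight, LinearMap.congr_fun hSφ⟩

/-- If the left integral does not vanish at the identity (`φ(1) = 1`), then `φ` is also a
right integral and `φ ∘ S = φ` (the modular element is trivial). -/
theorem left_integral_unital_is_right_integral
    {A : Type*} [Ring A] [HopfAlgebra ℂ A]
    (hS : Function.Bijective (antipode (R := ℂ) (A := A)))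
    (φ : A →ₗ[ℂ] ℂ) (hφ0 : φ ≠ 0)
    (hφL : ∀ a : A,
      (TensorProduct.rid ℂ A) (LinearMap.lTensor A φ (Coalgebra.comul a)) = φ a • (1 : A))
    (hφ1 : φ 1 = 1) :
    (∀ a : A,
        (TensorProduct.lid ℂ A) (LinearMap.rTensor A φ (Coalgebra.comul a)) = φ a • (1 : A)) ∧
      ∀ a : A, φ (antipode (R := ℂ) a) = φ a :=
  left_integral_unital_is_right_integral_general hS φ hφL hφ1
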